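/- arXiv:1712.08768 — 5 statements merged into one kernel-verified Lean document; each statement's English description precedes it below -/
import Mathlib

section
/- Fix reals C > 0, N > 0, f > 0, ς > 0, P ≥ 0, β ≥ 0, μ ≥ 0, B > 0. If (μ + β·P)/(β·ς·N·f² + 1) ≤ B, then U_B is nondecreasing on the interval [N·B/(f + N·B), 1]; i.e., for all x, y with N·B/(f + N·B) ≤ x ≤ y ≤ 1 one has U_B(x) ≤ U_B(y). -/
/-!
Above the threshold `N * B / (f + N * B)` transmission is the bottleneck, so the delay term is
`x * C / B` and `U_B` is affine in `x` with slope `C * (β * ς * N * f ^ 2 + 1 - (μ + β * P) / B)`;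
the hypothesis on `B` says exactly that this slope is nonnegative.
-/

noncomputable def U (C N f ς P β μ B x : ℝ) : ℝ :=
  x * C - β * (ς * C * N * f ^ 2 * (1 - x) + P * x * C / B) -
    μ * max ((1 - x) * C * N / f) (x * C / B)

section

variable {C N f ς P β μ B x : ℝ}

lemma max_delay_eq_transmission (hC : 0 ≤ C) (hN : 0 ≤ N) (hf : 0 < f) (hB : 0 < B)
    (hx : N * B / (f + N * B) ≤ x) :
    max ((1 - x) * C * N / f) (x * C / B) = x * C / B := by
  have hNB : N * B ≤ x * (f + N * B) := (div_le_iff₀ (by positivity)).mp hx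
  refine max_eq_right ((div_le_div_iff₀ hf hB).mpr ?_)
  nlinarith [mul_le_mul_of_nonneg_left hNB hC]

lemma U_eq_affine_of_threshold_le (hC : 0 ≤ C) (hN : 0 ≤ N) (hf : 0 < f) (hB : 0 < B)
    (hx : N * B / (f + N * B) ≤ x) :
    U C N f ς P β μ B x =
      C * (β * ς * N * f ^ 2 + 1 - (μ + β * P) / B) * x - β * ς * C * N * f ^ 2 := by
  rw [U, max_delay_eq_transmission hC hN hf hB hx]
  ring

lemma monotoneOn_U_Ici (hC : 0 ≤ C) (hN : 0 ≤ N) (hf : 0 < f) (hς : 0 ≤ ς) (hβ : 0 ≤ β)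
    (hB : 0 < B) (hcond : (μ + β * P) / (β * ς * N * f ^ 2 + 1) ≤ B) :
    MonotoneOn (U C N f ς P β μ B) (Set.Ici (N * B / (f + N * B))) := by
  have hslope : 0 ≤ C * (β * ς * N * f ^ 2 + 1 - (μ + β * P) / B) := by
    have hcond' := (div_le_iff₀ (by positivity)).mp hcond
    refine mul_nonneg hC (sub_nonneg.mpr ((div_le_iff₀ hB).mpr ?_))
    linarith
  intro x hx y hy hxy
  rw [U_eq_affine_of_threshold_le hC hN hf hB hx, U_eq_affine_of_threshold_le hC hN hf hB hy]
  gcongr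

end

theorem stmt_3_general (C N f ς P β μ B : ℝ) (hC : 0 < C) (hN : 0 < N) (hf : 0 < f)
    (hς : 0 < ς) (hβ : 0 ≤ β) (hB : 0 < B)
    (hcond : (μ + β * P) / (β * ς * N * f ^ 2 + 1) ≤ B) :
    ∀ x y : ℝ, N * B / (f + N * B) ≤ x → x ≤ y → y ≤ 1 →
      U C N f ς P β μ B x ≤ U C N f ς P β μ B y :=
  fun _ _ hx hxy _ =>
    monotoneOn_U_Ici hC.le hN.le hf hς.le hβ hB hcond hx (hx.trans hxy) hxy

theorem stmt_3 (C N f ς P β μ B : ℝ) (hC : 0 < C) (hN : 0 < N) (hf : 0 < f)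
    (hς : 0 < ς) (hP : 0 ≤ P) (hβ : 0 ≤ β) (hμ : 0 ≤ μ) (hB : 0 < B)
    (hcond : (μ + β * P) / (β * ς * N * f ^ 2 + 1) ≤ B) :
    ∀ x y : ℝ, N * B / (f + N * B) ≤ x → x ≤ y → y ≤ 1 →
      U C N f ς P β μ B x ≤ U C N f ς P β μ B y :=
  stmt_3_general C N f ς P β μ B hC hN hf hς hβ hB hcond
end

section
/- Fix reals C > 0, N > 0, f > 0, ς > 0, P ≥ 0, β ≥ 0, μ ≥ 0, B > 0. If B·(f + β·ς·N·f³ + μ·N) ≥ β·P·f, then U_B is nondecreasing on the interval [0, N·B/(f + N·B)]; i.e., for all x, y with 0 ≤ x ≤ y ≤ N·B/(f + N·B) one has U_B(x) ≤ U_B(y). -/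
/-! Below the crossover point `N * B / (f + N * B)` local computing is the bottleneck of the
delay, so `U_B` is affine there, with slope `C * (B * (f + β ς N f³ + μ N) - β P f) / (B f)`;
the hypothesis says exactly that this slope is nonnegative. -/

section

variable {C N f ς P β μ B z : ℝ}

theorem max_delay_eq_local (hC : 0 ≤ C) (hf : 0 < f) (hB : 0 < B) (hfNB : 0 < f + N * B)
    (hz : z ≤ N * B / (f + N * B)) :
    max ((1 - z) * C * N / f) (z * C / B) = (1 - z) * C * N / f := by
  refine max_eq_left ?_
  have hz' : z * (f + N * B) ≤ N * B := (le_div_iff₀ hfNB).mp hz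
  rw [div_le_div_iff₀ hB hf]
  nlinarith

theorem U_eq_affine (hC : 0 ≤ C) (hf : 0 < f) (hB : 0 < B) (hfNB : 0 < f + N * B)
    (hz : z ≤ N * B / (f + N * B)) :
    U C N f ς P β μ B z = -(β * ς * C * N * f ^ 2) - μ * C * N / f +
      z * (C * (B * (f + β * ς * N * f ^ 3 + μ * N) - β * P * f) / (B * f)) := by
  rw [U, max_delay_eq_local hC hf hB hfNB hz]
  field_simp
  ring

end

theorem stmt_4_general (C N f ς P β μ B : ℝ) (hC : 0 < C) (hN : 0 < N) (hf : 0 < f)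
    (hB : 0 < B)
    (hcond : β * P * f ≤ B * (f + β * ς * N * f ^ 3 + μ * N)) :
    ∀ x y : ℝ, 0 ≤ x → x ≤ y → y ≤ N * B / (f + N * B) →
      U C N f ς P β μ B x ≤ U C N f ς P β μ B y := by
  intro x y _ hxy hy
  have hfNB : 0 < f + N * B := by positivity
  have hslope : 0 ≤ C * (B * (f + β * ς * N * f ^ 3 + μ * N) - β * P * f) / (B * f) :=
    div_nonneg (mul_nonneg hC.le (sub_nonneg.mpr hcond)) (by positivity)
  rw [U_eq_affine hC.le hf hB hfNB (hxy.trans hy), U_eq_affine hC.le hf hB hfNB hy]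
  gcongr

theorem stmt_4 (C N f ς P β μ B : ℝ) (hC : 0 < C) (hN : 0 < N) (hf : 0 < f)
    (hς : 0 < ς) (hP : 0 ≤ P) (hβ : 0 ≤ β) (hμ : 0 ≤ μ) (hB : 0 < B)
    (hcond : β * P * f ≤ B * (f + β * ς * N * f ^ 3 + μ * N)) :
    ∀ x y : ℝ, 0 ≤ x → x ≤ y → y ≤ N * B / (f + N * B) →
      U C N f ς P β μ B x ≤ U C N f ς P β μ B y :=
  stmt_4_general C N f ς P β μ B hC hN hf hB hcond
end

section
/- Fix reals C > 0, N > 0, f > 0, ς > 0, P ≥ 0, β ≥ 0, μ ≥ 0, B > 0. If B·(f + β·ς·N·f³ + μ·N) ≤ β·P·f, then U_B is nonincreasing on the interval [0, N·B/(f + N·B)]; i.e., for all x, y with 0 ≤ x ≤ y ≤ N·B/(f + N·B) one has U_B(y) ≤ U_B(x). -/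
theorem max_delay_eq_left {C N f B x : ℝ} (hC : 0 ≤ C) (hN : 0 < N) (hf : 0 < f) (hB : 0 < B)
    (hx : x ≤ N * B / (f + N * B)) :
    max ((1 - x) * C * N / f) (x * C / B) = (1 - x) * C * N / f := by
  have hxf : x * f ≤ (1 - x) * N * B := by
    rw [le_div_iff₀ (by positivity)] at hx
    linarith
  refine max_eq_left ?_
  rw [div_le_div_iff₀ hB hf]
  calc x * C * f = C * (x * f) := by ring
    _ ≤ C * ((1 - x) * N * B) := mul_le_mul_of_nonneg_left hxf hC
    _ = (1 - x) * C * N * B := by ring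

theorem U_sub_U_of_le_threshold {C N f ς P β μ B x y : ℝ} (hC : 0 ≤ C) (hN : 0 < N)
    (hf : 0 < f) (hB : 0 < B) (hx : x ≤ N * B / (f + N * B)) (hy : y ≤ N * B / (f + N * B)) :
    U C N f ς P β μ B y - U C N f ς P β μ B x =
      (y - x) * C * (1 + β * ς * N * f ^ 2 + μ * N / f - β * P / B) := by
  simp only [U, max_delay_eq_left hC hN hf hB hx, max_delay_eq_left hC hN hf hB hy]
  field_simp
  ring

theorem slope_nonpos_of_le {N f ς P β μ B : ℝ} (hf : 0 < f) (hB : 0 < B)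
    (h : B * (f + β * ς * N * f ^ 3 + μ * N) ≤ β * P * f) :
    1 + β * ς * N * f ^ 2 + μ * N / f - β * P / B ≤ 0 := by
  have hrw : 1 + β * ς * N * f ^ 2 + μ * N / f - β * P / B =
      (B * (f + β * ς * N * f ^ 3 + μ * N) - β * P * f) / (f * B) := by
    field_simp
  rw [hrw]
  exact div_nonpos_of_nonpos_of_nonneg (by linarith) (by positivity)

theorem stmt_7_general (C N f ς P β μ B : ℝ) (hC : 0 < C) (hN : 0 < N) (hf : 0 < f)
    (hB : 0 < B)
    (hcond : B * (f + β * ς * N * f ^ 3 + μ * N) ≤ β * P * f) :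
    ∀ x y : ℝ, 0 ≤ x → x ≤ y → y ≤ N * B / (f + N * B) →
      U C N f ς P β μ B y ≤ U C N f ς P β μ B x := by
  intro x y _ hxy hy
  have hdiff := U_sub_U_of_le_threshold (ς := ς) (P := P) (β := β) (μ := μ) hC.le hN hf hB
    (hxy.trans hy) hy
  have hdrop := mul_nonpos_of_nonneg_of_nonpos (mul_nonneg (sub_nonneg.2 hxy) hC.le)
    (slope_nonpos_of_le hf hB hcond)
  linarith

theorem stmt_7 (C N f ς P β μ B : ℝ) (hC : 0 < C) (hN : 0 < N) (hf : 0 < f)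
    (hς : 0 < ς) (hP : 0 ≤ P) (hβ : 0 ≤ β) (hμ : 0 ≤ μ) (hB : 0 < B)
    (hcond : B * (f + β * ς * N * f ^ 3 + μ * N) ≤ β * P * f) :
    ∀ x y : ℝ, 0 ≤ x → x ≤ y → y ≤ N * B / (f + N * B) →
      U C N f ς P β μ B y ≤ U C N f ς P β μ B x :=
  stmt_7_general C N f ς P β μ B hC hN hf hB hcond
end

section
/- Fix reals C > 0, N > 0, f > 0, ς > 0, P ≥ 0, β ≥ 0, μ ≥ 0, B > 0. If (μ + β·P)/(β·ς·N·f² + 1) ≤ B, then full offloading is optimal for that link: for every x ∈ [0,1], U_B(x) ≤ U_B(1), and U_B(1) = C·(B − β·P − μ)/B. -/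
section

variable {C N f ς P β μ B : ℝ}

theorem U_one (hC : 0 ≤ C) (hB : 0 < B) :
    U C N f ς P β μ B 1 = C * (B - β * P - μ) / B := by
  have hdelay : max ((1 - 1) * C * N / f) (1 * C / B) = C / B := by
    rw [sub_self, zero_mul, zero_mul, zero_div, one_mul]
    exact max_eq_right (by positivity)
  unfold U
  rw [hdelay]
  field_simp
  ring

/-- Dropping the local-computation branch of the delay only lowers `U`, and what remains is
affine in `x`. -/
theorem U_le_U_one_sub (hC : 0 ≤ C) (hB : 0 < B) (hμ : 0 ≤ μ) (x : ℝ) :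
    U C N f ς P β μ B x ≤
      U C N f ς P β μ B 1 - (1 - x) * C * (β * ς * N * f ^ 2 + 1 - (μ + β * P) / B) := by
  have hdelay : μ * (x * C / B) ≤ μ * max ((1 - x) * C * N / f) (x * C / B) :=
    mul_le_mul_of_nonneg_left (le_max_right _ _) hμ
  calc U C N f ς P β μ B x
      ≤ x * C - β * (ς * C * N * f ^ 2 * (1 - x) + P * x * C / B) - μ * (x * C / B) := by
        unfold U; linarith
    _ = C * (B - β * P - μ) / B - (1 - x) * C * (β * ς * N * f ^ 2 + 1 - (μ + β * P) / B) := by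
        field_simp; ring
    _ = _ := by rw [U_one hC hB]

end

theorem stmt_9_general (C N f ς P β μ B : ℝ) (hC : 0 < C) (hN : 0 < N)
    (hς : 0 < ς) (hβ : 0 ≤ β) (hμ : 0 ≤ μ) (hB : 0 < B)
    (hcond : (μ + β * P) / (β * ς * N * f ^ 2 + 1) ≤ B) :
    (∀ x ∈ Set.Icc (0:ℝ) 1, U C N f ς P β μ B x ≤ U C N f ς P β μ B 1) ∧
    U C N f ς P β μ B 1 = C * (B - β * P - μ) / B := by
  have hden : 0 < β * ς * N * f ^ 2 + 1 := by positivity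
  have hgap : 0 ≤ β * ς * N * f ^ 2 + 1 - (μ + β * P) / B :=
    sub_nonneg.2 ((div_le_comm₀ hden hB).1 hcond)
  refine ⟨fun x hx => ?_, U_one hC.le hB⟩
  have hloss : 0 ≤ (1 - x) * C * (β * ς * N * f ^ 2 + 1 - (μ + β * P) / B) :=
    mul_nonneg (mul_nonneg (sub_nonneg.2 hx.2) hC.le) hgap
  exact (U_le_U_one_sub hC.le hB hμ x).trans (sub_le_self _ hloss)

theorem stmt_9 (C N f ς P β μ B : ℝ) (hC : 0 < C) (hN : 0 < N) (hf : 0 < f)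
    (hς : 0 < ς) (hP : 0 ≤ P) (hβ : 0 ≤ β) (hμ : 0 ≤ μ) (hB : 0 < B)
    (hcond : (μ + β * P) / (β * ς * N * f ^ 2 + 1) ≤ B) :
    (∀ x ∈ Set.Icc (0:ℝ) 1, U C N f ς P β μ B x ≤ U C N f ς P β μ B 1) ∧
    U C N f ς P β μ B 1 = C * (B - β * P - μ) / B :=
  stmt_9_general C N f ς P β μ B hC hN hς hβ hμ hB hcond
end

section
/- Fix reals C > 0, N > 0, f > 0, ς > 0, P ≥ 0, β ≥ 0, μ ≥ 0, B > 0. If B·(f + β·ς·N·f³ + μ·N) ≤ β·P·f, then purely local computing is optimal for that link: for every x ∈ [0,1], U_B(x) ≤ U_B(0), and U_B(0) = −C·N·(β·ς·f² + μ/f). -/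
theorem U_zero {C N f ς P β μ B : ℝ} (hCNf : 0 ≤ C * N / f) :
    U C N f ς P β μ B 0 = -(C * N * (β * ς * f ^ 2 + μ / f)) := by
  have hmax : max ((1 - 0) * C * N / f) (0 * C / B) = C * N / f := by
    rw [zero_mul, zero_div, sub_zero, one_mul]
    exact max_eq_left hCNf
  rw [U, hmax]
  ring

theorem U_le_local_delay_bound {C N f ς P β μ B : ℝ} (hμ : 0 ≤ μ) (x : ℝ) :
    U C N f ς P β μ B x ≤
      x * C - β * (ς * C * N * f ^ 2 * (1 - x) + P * x * C / B) - μ * ((1 - x) * C * N / f) := by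
  have := mul_le_mul_of_nonneg_left (le_max_left ((1 - x) * C * N / f) (x * C / B)) hμ
  rw [U]
  linarith

theorem local_delay_bound_eq {C N f ς P β μ B : ℝ} (hf : f ≠ 0) (hB : B ≠ 0) (x : ℝ) :
    x * C - β * (ς * C * N * f ^ 2 * (1 - x) + P * x * C / B) - μ * ((1 - x) * C * N / f) =
      -(C * N * (β * ς * f ^ 2 + μ / f)) -
        x * C * (β * P * f - B * (f + β * ς * N * f ^ 3 + μ * N)) / (B * f) := by
  field_simp
  ring

theorem stmt_10_general (C N f ς P β μ B : ℝ) (hC : 0 < C) (hN : 0 < N) (hf : 0 < f)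
    (hμ : 0 ≤ μ) (hB : 0 < B)
    (hcond : B * (f + β * ς * N * f ^ 3 + μ * N) ≤ β * P * f) :
    (∀ x ∈ Set.Icc (0:ℝ) 1, U C N f ς P β μ B x ≤ U C N f ς P β μ B 0) ∧
    U C N f ς P β μ B 0 = -(C * N * (β * ς * f ^ 2 + μ / f)) := by
  have h0 : U C N f ς P β μ B 0 = _ := U_zero (by positivity)
  refine ⟨fun x ⟨hx0, _⟩ => ?_, h0⟩
  have hslack : 0 ≤ x * C * (β * P * f - B * (f + β * ς * N * f ^ 3 + μ * N)) / (B * f) :=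
    div_nonneg (mul_nonneg (mul_nonneg hx0 hC.le) (sub_nonneg.2 hcond)) (mul_pos hB hf).le
  calc U C N f ς P β μ B x
      ≤ x * C - β * (ς * C * N * f ^ 2 * (1 - x) + P * x * C / B) -
          μ * ((1 - x) * C * N / f) := U_le_local_delay_bound hμ x
    _ = U C N f ς P β μ B 0 -
          x * C * (β * P * f - B * (f + β * ς * N * f ^ 3 + μ * N)) / (B * f) := by
        rw [local_delay_bound_eq hf.ne' hB.ne', h0]
    _ ≤ U C N f ς P β μ B 0 := sub_le_self _ hslack

theorem stmt_10 (C N f ς P β μ B : ℝ) (hC : 0 < C) (hN : 0 < N) (hf : 0 < f)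
    (hς : 0 < ς) (hP : 0 ≤ P) (hβ : 0 ≤ β) (hμ : 0 ≤ μ) (hB : 0 < B)
    (hcond : B * (f + β * ς * N * f ^ 3 + μ * N) ≤ β * P * f) :
    (∀ x ∈ Set.Icc (0:ℝ) 1, U C N f ς P β μ B x ≤ U C N f ς P β μ B 0) ∧
    U C N f ς P β μ B 0 = -(C * N * (β * ς * f ^ 2 + μ / f)) :=
  stmt_10_general C N f ς P β μ B hC hN hf hμ hB hcond
end
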